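/- Let V be a finite set of atomic propositions partitioned into inputs I and outputs O, and let φ = ψ1' ∧ ψ2' ∧ ((φ1 ∧ φ2 ∧ φ3) → (ψ1 ∧ ψ2)) be an LTL formula with prop(φ) = V, where prop(φ3) ⊆ I, (prop(ψ1) ∪ prop(ψ1')) ∩ (prop(ψ2) ∪ prop(ψ2')) ⊆ I, prop(φi) ∩ prop(φj) = ∅ for distinct i, j ∈ {1,2,3}, prop(φi) ∩ prop(ψ_{3−i}) = ∅ for i ∈ {1,2}, and prop(ψi') ∩ prop(φ_{3−i}) = ∅ for i ∈ {1,2}. Assume that ¬(φ1 ∧ φ2 ∧ φ3) is unrealizable over V and that there exists a counterstrategy for its language (so every word compatible with this counterstrategy satisfies φ1 ∧ φ2 ∧ φ3). Then φ is realizable over V if and only if both φ' = ψ1' ∧ ((φ1 ∧ φ3) → ψ1) and φ'' = ψ2' ∧ ((φ2 ∧ φ3) → ψ2) are realizable (over the variables occurring in them, with the corresponding restricted inputs and outputs). -/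
import Mathlib


namespace SpecDecomp

variable {α : Type*}

/-- Restriction of an infinite word: intersect each letter with `X`. -/
def restrict (σ : ℕ → Set α) (X : Set α) : ℕ → Set α := fun n => σ n ∩ X

/-- Restriction of a finite word (history): intersect each letter with `X`. -/
def restrictFin (h : List (Set α)) (X : Set α) : List (Set α) := h.map (· ∩ X)

/-- Letterwise union of infinite words. -/
def wordUnion (σ₁ σ₂ : ℕ → Set α) : ℕ → Set α := fun n => σ₁ n ∪ σ₂ n

/-- The set of infinite words over the alphabet `2^W`. -/
def WordsOver (W : Set α) : Set (ℕ → Set α) := {σ | ∀ n, σ n ⊆ W}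

/-- Non-contradictory composition of a language `L₁` over `2^{W₁}` and a
language `L₂` over `2^{W₂}`. -/
def comp (L₁ : Set (ℕ → Set α)) (W₁ : Set α) (L₂ : Set (ℕ → Set α)) (W₂ : Set α) :
    Set (ℕ → Set α) :=
  {σ | ∃ σ₁ ∈ L₁, ∃ σ₂ ∈ L₂, restrict σ₁ W₂ = restrict σ₂ W₁ ∧ σ = wordUnion σ₁ σ₂}

/-- The finite history consisting of the first `n` letters of `σ`. -/
def hist (σ : ℕ → Set α) (n : ℕ) : List (Set α) := (List.range n).map σ

/-- An infinite word over `2^W` is compatible with the implementation `f`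
(for variables `W`, inputs `Iw`, outputs `Ow`). -/
def CompatibleImpl (W Iw Ow : Set α) (f : List (Set α) → Set α → Set α)
    (σ : ℕ → Set α) : Prop :=
  (∀ n, σ n ⊆ W) ∧ ∀ n, f (hist σ n) (σ n ∩ Iw) = σ n ∩ Ow

/-- The implementation `f` realizes the language `L`. -/
def Realizes (W Iw Ow : Set α) (f : List (Set α) → Set α → Set α)
    (L : Set (ℕ → Set α)) : Prop :=
  ∀ σ, CompatibleImpl W Iw Ow f σ → σ ∈ L

/-- `L` is realizable over variables `W` with inputs `Iw` and outputs `Ow`. -/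
def Realizable (W Iw Ow : Set α) (L : Set (ℕ → Set α)) : Prop :=
  ∃ f : List (Set α) → Set α → Set α,
    (∀ h i, f h i ⊆ Ow) ∧ Realizes W Iw Ow f L

/-- An infinite word over `2^W` is compatible with the counterstrategy `fc`. -/
def CompatibleCounter (W Iw : Set α) (fc : List (Set α) → Set α)
    (σ : ℕ → Set α) : Prop :=
  (∀ n, σ n ⊆ W) ∧ ∀ n, fc (hist σ n) = σ n ∩ Iw

/-- `fc` is a counterstrategy for `L`: every compatible word lies in the
complement of `L`. -/
def Counterstrategy (W Iw : Set α) (fc : List (Set α) → Set α)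
    (L : Set (ℕ → Set α)) : Prop :=
  ∀ σ, CompatibleCounter W Iw fc σ → σ ∉ L

/-- Syntax of linear-time temporal logic. -/
inductive LTL (α : Type*) where
  | atom : α → LTL α
  | tt : LTL α
  | not : LTL α → LTL α
  | or : LTL α → LTL α → LTL α
  | and : LTL α → LTL α → LTL α
  | next : LTL α → LTL α
  | until_ : LTL α → LTL α → LTL α

namespace LTL

/-- The set of atomic propositions occurring in a formula
(`true` contributes no atomic propositions). -/
def props : LTL α → Set α
  | atom a => {a}
  | tt => ∅
  | not φ => props φ
  | or φ ψ => props φ ∪ props ψ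
  | and φ ψ => props φ ∪ props ψ
  | next φ => props φ
  | until_ φ ψ => props φ ∪ props ψ

/-- Satisfaction of an LTL formula at position `n` of the infinite word `σ`. -/
def SatAt (σ : ℕ → Set α) : LTL α → ℕ → Prop
  | atom a, n => a ∈ σ n
  | tt, _ => True
  | not φ, n => ¬ SatAt σ φ n
  | or φ ψ, n => SatAt σ φ n ∨ SatAt σ ψ n
  | and φ ψ, n => SatAt σ φ n ∧ SatAt σ ψ n
  | next φ, n => SatAt σ φ (n + 1)
  | until_ φ ψ, n =>
      ∃ m, n ≤ m ∧ SatAt σ ψ m ∧ ∀ k, n ≤ k → k < m → SatAt σ φ k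

/-- `σ ⊨ φ`. -/
def Sat (σ : ℕ → Set α) (φ : LTL α) : Prop := SatAt σ φ 0

/-- Implication, as the usual abbreviation `φ → ψ ≡ ¬φ ∨ ψ`. -/
def impl (φ ψ : LTL α) : LTL α := or (not φ) ψ

/-- The language of `φ` over the alphabet `2^W`. -/
def LangOver (φ : LTL α) (W : Set α) : Set (ℕ → Set α) :=
  {σ | (∀ n, σ n ⊆ W) ∧ Sat σ φ}

end LTL


/-! ### Auxiliary lemmas -/

lemma hist_zero (σ : ℕ → Set α) : hist σ 0 = [] := by simp [hist]

lemma hist_succ (σ : ℕ → Set α) (n : ℕ) : hist σ (n + 1) = hist σ n ++ [σ n] := by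
  simp [hist, List.range_succ]

lemma hist_restrict (σ : ℕ → Set α) (X : Set α) (n : ℕ) :
    hist (restrict σ X) n = restrictFin (hist σ n) X := by
  simp [hist, restrict, restrictFin, Function.comp]

lemma satAt_congr {σ τ : ℕ → Set α} (φ : LTL α)
    (h : ∀ n a, a ∈ φ.props → (a ∈ σ n ↔ a ∈ τ n)) (n : ℕ) :
    LTL.SatAt σ φ n ↔ LTL.SatAt τ φ n := by
  induction φ generalizing n with
  | atom a => simpa [LTL.SatAt] using h n a (by simp [LTL.props])
  | tt => simp [LTL.SatAt]
  | not φ ih => simp only [LTL.SatAt]; rw [ih h]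
  | or φ ψ ih1 ih2 =>
      simp only [LTL.SatAt]
      rw [ih1 (fun n a ha => h n a (Set.mem_union_left _ ha)),
          ih2 (fun n a ha => h n a (Set.mem_union_right _ ha))]
  | and φ ψ ih1 ih2 =>
      simp only [LTL.SatAt]
      rw [ih1 (fun n a ha => h n a (Set.mem_union_left _ ha)),
          ih2 (fun n a ha => h n a (Set.mem_union_right _ ha))]
  | next φ ih => simp only [LTL.SatAt]; rw [ih h]
  | until_ φ ψ ih1 ih2 =>
      simp only [LTL.SatAt]
      constructor
      · rintro ⟨m, hm, hψ, hφ⟩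
        exact ⟨m, hm, (ih2 (fun n a ha => h n a (Set.mem_union_right _ ha)) m).mp hψ,
          fun k h1 h2 => (ih1 (fun n a ha => h n a (Set.mem_union_left _ ha)) k).mp (hφ k h1 h2)⟩
      · rintro ⟨m, hm, hψ, hφ⟩
        exact ⟨m, hm, (ih2 (fun n a ha => h n a (Set.mem_union_right _ ha)) m).mpr hψ,
          fun k h1 h2 => (ih1 (fun n a ha => h n a (Set.mem_union_left _ ha)) k).mpr (hφ k h1 h2)⟩

lemma satAt_restrict {σ : ℕ → Set α} {X : Set α} (φ : LTL α) (h : φ.props ⊆ X) (n : ℕ) :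
    LTL.SatAt (restrict σ X) φ n ↔ LTL.SatAt σ φ n :=
  satAt_congr φ (fun n a ha => by simp [restrict, h ha]) n

/-! ### Simulation machinery for the hard direction -/

/-- One step of the joint simulation of a play of `f` against a partially
counterstrategy-driven environment, together with a shadow play fully driven
by the counterstrategy `fc`. -/
def simStep (f : List (Set α) → Set α → Set α) (fc : List (Set α) → Set α)
    (I W : Set α) (p : List (Set α) × List (Set α)) (x : Set α) :
    List (Set α) × List (Set α) :=
  (p.1 ++ [((x ∩ I) ∪ (fc p.2 \ W)) ∪ f p.1 ((x ∩ I) ∪ (fc p.2 \ W))],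
   p.2 ++ [fc p.2 ∪ f p.1 ((x ∩ I) ∪ (fc p.2 \ W))])

/-- The joint simulation along a finite history over the variables `W`. -/
def sim (f : List (Set α) → Set α → Set α) (fc : List (Set α) → Set α)
    (I W : Set α) (h : List (Set α)) : List (Set α) × List (Set α) :=
  h.foldl (simStep f fc I W) ([], [])

/-- The environment input used in the joint simulation at step `n`. -/
def simInput (f : List (Set α) → Set α → Set α) (fc : List (Set α) → Set α)
    (I W : Set α) (ρ : ℕ → Set α) (n : ℕ) : Set α :=
  (ρ n ∩ I) ∪ (fc (sim f fc I W (hist ρ n)).2 \ W)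

/-- The full word produced by playing `f` against actual inputs on `W` and
counterstrategy inputs elsewhere. -/
def realWord (f : List (Set α) → Set α → Set α) (fc : List (Set α) → Set α)
    (I W : Set α) (ρ : ℕ → Set α) (n : ℕ) : Set α :=
  simInput f fc I W ρ n ∪ f (sim f fc I W (hist ρ n)).1 (simInput f fc I W ρ n)

/-- The shadow word: inputs fully given by the counterstrategy, outputs copied
from the real word. -/
def cWord (f : List (Set α) → Set α → Set α) (fc : List (Set α) → Set α)
    (I W : Set α) (ρ : ℕ → Set α) (n : ℕ) : Set α :=
  fc (sim f fc I W (hist ρ n)).2 ∪ f (sim f fc I W (hist ρ n)).1 (simInput f fc I W ρ n)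

lemma sim_hist (f : List (Set α) → Set α → Set α) (fc : List (Set α) → Set α)
    (I W : Set α) (ρ : ℕ → Set α) (n : ℕ) :
    sim f fc I W (hist ρ n) = (hist (realWord f fc I W ρ) n, hist (cWord f fc I W ρ) n) := by
  induction n with
  | zero => simp [sim, hist_zero]
  | succ n ih =>
      have : sim f fc I W (hist ρ (n + 1)) = simStep f fc I W (sim f fc I W (hist ρ n)) (ρ n) := by
        rw [hist_succ]
        simp [sim, List.foldl_append]
      rw [this, hist_succ, hist_succ]
      simp only [simStep, realWord, cWord, simInput, ih]

/-- The key transfer lemma: if `f` realizes a property that together with `B`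
entails `θ`, and the counterstrategy `fc` forces `B`, then `θ` is realizable
over its own variables. -/
lemma aux_real (V I O : Set α) (hIO : I ∩ O = ∅) (hpart : I ∪ O = V)
    (θ B : LTL α)
    (f : List (Set α) → Set α → Set α) (hfO : ∀ h i, f h i ⊆ O)
    (fc : List (Set α) → Set α) (hfcI : ∀ h, fc h ⊆ I)
    (hWV : θ.props ⊆ V)
    (hB : ∀ a ∈ B.props, a ∉ θ.props)
    (hf : ∀ σ, CompatibleImpl V I O f σ → LTL.Sat σ B → LTL.Sat σ θ)
    (hfc : ∀ σ, CompatibleCounter V I fc σ → LTL.Sat σ B) :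
    Realizable θ.props (I ∩ θ.props) (O ∩ θ.props) (θ.LangOver θ.props) := by
  classical
  set W := θ.props with hW
  refine ⟨fun h i => f (sim f fc I W h).1 ((i ∩ I) ∪ (fc (sim f fc I W h).2 \ W)) ∩ W,
    fun h i => Set.inter_subset_inter (hfO _ _) le_rfl, ?_⟩
  rintro ρ ⟨hρW, hρf⟩
  set σ := realWord f fc I W ρ with hσdef
  set σ' := cWord f fc I W ρ with hσ'def
  have key := sim_hist f fc I W ρ
  have key1 : ∀ n, (sim f fc I W (hist ρ n)).1 = hist σ n := fun n => by rw [key n]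
  have key2 : ∀ n, (sim f fc I W (hist ρ n)).2 = hist σ' n := fun n => by rw [key n]
  have hIdisj : ∀ a, a ∈ I → a ∉ O := by
    intro a haI haO
    have : a ∈ I ∩ O := ⟨haI, haO⟩
    rw [hIO] at this
    exact this
  -- input used at step n
  set i : ℕ → Set α := fun n => simInput f fc I W ρ n with hidef
  have hiI : ∀ n, i n ⊆ I := by
    intro n a ha
    rcases ha with ha | ha
    · exact ha.2
    · exact hfcI _ ha.1
  have hσn : ∀ n, σ n = i n ∪ f (hist σ n) (i n) := by
    intro n
    rw [hσdef]
    rw [realWord, key1]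
  have hσ'n : ∀ n, σ' n = fc (hist σ' n) ∪ f (hist σ n) (i n) := by
    intro n
    rw [hσ'def]
    rw [cWord, key1, key2]
  have hσI : ∀ n, σ n ∩ I = i n := by
    intro n
    rw [hσn n]
    ext a
    simp only [Set.mem_inter_iff, Set.mem_union]
    constructor
    · rintro ⟨ha | ha, haI⟩
      · exact ha
      · exact absurd (hfO _ _ ha) (hIdisj a haI)
    · intro ha
      exact ⟨Or.inl ha, hiI n ha⟩
  have hσO : ∀ n, σ n ∩ O = f (hist σ n) (i n) := by
    intro n
    rw [hσn n]
    ext a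
    simp only [Set.mem_inter_iff, Set.mem_union]
    constructor
    · rintro ⟨ha | ha, haO⟩
      · exact absurd haO (hIdisj a (hiI n ha))
      · exact ha
    · intro ha
      exact ⟨Or.inr ha, hfO _ _ ha⟩
  have hσV : ∀ n, σ n ⊆ V := by
    intro n a ha
    rw [hσn n] at ha
    rw [← hpart]
    rcases ha with ha | ha
    · exact Or.inl (hiI n ha)
    · exact Or.inr (hfO _ _ ha)
  have hσcomp : CompatibleImpl V I O f σ := by
    refine ⟨hσV, fun n => ?_⟩
    rw [hσI n, hσO n]
  have hσ'comp : CompatibleCounter V I fc σ' := by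
    constructor
    · intro n a ha
      rw [hσ'n n] at ha
      rw [← hpart]
      rcases ha with ha | ha
      · exact Or.inl (hfcI _ ha)
      · exact Or.inr (hfO _ _ ha)
    · intro n
      rw [hσ'n n]
      ext a
      simp only [Set.mem_inter_iff, Set.mem_union]
      constructor
      · intro ha
        exact ⟨Or.inl ha, hfcI _ ha⟩
      · rintro ⟨ha | ha, haI⟩
        · exact ha
        · exact absurd (hfO _ _ ha) (hIdisj a haI)
  have hin : ∀ n, i n = (ρ n ∩ I) ∪ (fc (hist σ' n) \ W) := fun n => by
    rw [hidef]; simp only [simInput, key2]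
  have hρσ : ∀ n, ρ n = σ n ∩ W := by
    intro n
    have hc := hρf n
    have h1 : ρ n ∩ (I ∩ W) ∩ I = ρ n ∩ I := by
      ext a
      constructor
      · rintro ⟨⟨ha, hI, _⟩, _⟩; exact ⟨ha, hI⟩
      · rintro ⟨ha, hI⟩; exact ⟨⟨ha, hI, hρW n ha⟩, hI⟩
    simp only [key1, key2, h1] at hc
    rw [← hin n] at hc
    have hfW : f (hist σ n) (i n) ∩ W = ρ n ∩ O := by
      rw [hc]
      ext a
      constructor
      · rintro ⟨ha1, ha2, _⟩; exact ⟨ha1, ha2⟩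
      · rintro ⟨ha1, ha2⟩; exact ⟨ha1, ha2, hρW n ha1⟩
    ext a
    constructor
    · intro ha
      have haW := hρW n ha
      have haV : a ∈ I ∪ O := by rw [hpart]; exact hWV haW
      refine ⟨?_, haW⟩
      rw [hσn n]
      rcases haV with haI | haO
      · exact Or.inl (by rw [hin n]; exact Or.inl ⟨ha, haI⟩)
      · have : a ∈ f (hist σ n) (i n) ∩ W := by rw [hfW]; exact ⟨ha, haO⟩
        exact Or.inr this.1
    · rintro ⟨haσ, haW⟩
      rw [hσn n, hin n] at haσ
      rcases haσ with (⟨h1, _⟩ | h2) | h3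
      · exact h1
      · exact absurd haW h2.2
      · have : a ∈ ρ n ∩ O := by rw [← hfW, hin n]; exact ⟨h3, haW⟩
        exact this.1
  have hagree : ∀ n a, a ∈ B.props → (a ∈ σ n ↔ a ∈ σ' n) := by
    intro n a haB
    have haW : a ∉ W := hB a haB
    rw [hσn n, hσ'n n, hin n]
    simp only [Set.mem_union, Set.mem_inter_iff, Set.mem_diff]
    constructor
    · rintro ((⟨ha, _⟩ | ⟨ha, _⟩) | ha)
      · exact absurd (hρW n ha) haW
      · exact Or.inl ha
      · exact Or.inr ha
    · rintro (ha | ha)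
      · exact Or.inl (Or.inr ⟨ha, haW⟩)
      · exact Or.inr ha
  have hBσ : LTL.Sat σ B := (satAt_congr B hagree 0).mpr (hfc σ' hσ'comp)
  have hθσ : LTL.Sat σ θ := hf σ hσcomp hBσ
  refine ⟨hρW, ?_⟩
  have hρr : ρ = restrict σ W := funext fun n => hρσ n
  rw [hρr]
  exact (satAt_restrict θ (by rw [hW]) 0).mpr hθσ

/-- decomposition of a specification with two extra conjuncts
`ψ₁'`, `ψ₂'` and an assume-guarantee part into two subspecifications. -/
theorem assume_guarantee_decomposition_with_conjuncts
    (V I O : Set α) (hVfin : V.Finite) (hpart : I ∪ O = V) (hIO : I ∩ O = ∅)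
    (φ₁ φ₂ φ₃ ψ₁ ψ₂ ψ₁' ψ₂' : LTL α)
    (hV : (ψ₁'.and (ψ₂'.and ((φ₁.and (φ₂.and φ₃)).impl (ψ₁.and ψ₂)))).props = V)
    (hφ₃ : φ₃.props ⊆ I)
    (hψ : (ψ₁.props ∪ ψ₁'.props) ∩ (ψ₂.props ∪ ψ₂'.props) ⊆ I)
    (h₁₂ : φ₁.props ∩ φ₂.props = ∅)
    (h₁₃ : φ₁.props ∩ φ₃.props = ∅)
    (h₂₃ : φ₂.props ∩ φ₃.props = ∅)
    (h₁ψ₂ : φ₁.props ∩ ψ₂.props = ∅)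
    (h₂ψ₁ : φ₂.props ∩ ψ₁.props = ∅)
    (hψ₁'φ₂ : ψ₁'.props ∩ φ₂.props = ∅)
    (hψ₂'φ₁ : ψ₂'.props ∩ φ₁.props = ∅)
    (hunreal : ¬ Realizable V I O ((LTL.not (φ₁.and (φ₂.and φ₃))).LangOver V))
    (hcs : ∃ fc : List (Set α) → Set α, (∀ h, fc h ⊆ I) ∧
      Counterstrategy V I fc ((LTL.not (φ₁.and (φ₂.and φ₃))).LangOver V)) :
    Realizable V I O
        ((ψ₁'.and (ψ₂'.and ((φ₁.and (φ₂.and φ₃)).impl (ψ₁.and ψ₂)))).LangOver V) ↔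
      (Realizable (ψ₁'.and ((φ₁.and φ₃).impl ψ₁)).props
          (I ∩ (ψ₁'.and ((φ₁.and φ₃).impl ψ₁)).props)
          (O ∩ (ψ₁'.and ((φ₁.and φ₃).impl ψ₁)).props)
          ((ψ₁'.and ((φ₁.and φ₃).impl ψ₁)).LangOver
            (ψ₁'.and ((φ₁.and φ₃).impl ψ₁)).props) ∧
       Realizable (ψ₂'.and ((φ₂.and φ₃).impl ψ₂)).props
          (I ∩ (ψ₂'.and ((φ₂.and φ₃).impl ψ₂)).props)
          (O ∩ (ψ₂'.and ((φ₂.and φ₃).impl ψ₂)).props)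
          ((ψ₂'.and ((φ₂.and φ₃).impl ψ₂)).LangOver
            (ψ₂'.and ((φ₂.and φ₃).impl ψ₂)).props)) := by
  classical
  have hIdisj : ∀ a ∈ I, a ∉ O := by
    intro a haI haO
    have : a ∈ I ∩ O := ⟨haI, haO⟩
    rw [hIO] at this
    exact this
  have mk : ∀ s t : Set α, s ∩ t = ∅ → ∀ a ∈ s, a ∉ t := by
    intro s t hst a ha hb
    have : a ∈ s ∩ t := ⟨ha, hb⟩
    rw [hst] at this
    exact this
  have d₁₂ := mk _ _ h₁₂
  have d₁₃ := mk _ _ h₁₃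
  have d₂₃ := mk _ _ h₂₃
  have d₁ψ₂ := mk _ _ h₁ψ₂
  have d₂ψ₁ := mk _ _ h₂ψ₁
  have dψ₁'φ₂ := mk _ _ hψ₁'φ₂
  have dψ₂'φ₁ := mk _ _ hψ₂'φ₁
  have hψ' : ∀ a, (a ∈ ψ₁.props ∨ a ∈ ψ₁'.props) → (a ∈ ψ₂.props ∨ a ∈ ψ₂'.props) → a ∈ I := by
    intro a h1 h2
    exact hψ ⟨h1, h2⟩
  set θ₁ := ψ₁'.and ((φ₁.and φ₃).impl ψ₁) with hθ₁
  set θ₂ := ψ₂'.and ((φ₂.and φ₃).impl ψ₂) with hθ₂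
  have hθ₁props : θ₁.props = ψ₁'.props ∪ ((φ₁.props ∪ φ₃.props) ∪ ψ₁.props) := rfl
  have hθ₂props : θ₂.props = ψ₂'.props ∪ ((φ₂.props ∪ φ₃.props) ∪ ψ₂.props) := rfl
  have hbigprops : (ψ₁'.and (ψ₂'.and ((φ₁.and (φ₂.and φ₃)).impl (ψ₁.and ψ₂)))).props =
      ψ₁'.props ∪ (ψ₂'.props ∪ ((φ₁.props ∪ (φ₂.props ∪ φ₃.props)) ∪ (ψ₁.props ∪ ψ₂.props))) := rfl
  have hθ₁V : θ₁.props ⊆ V := by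
    rw [← hV, hbigprops, hθ₁props]
    intro a ha
    rcases ha with ha | (ha | ha) | ha
    · exact Or.inl ha
    · exact Or.inr (Or.inr (Or.inl (Or.inl ha)))
    · exact Or.inr (Or.inr (Or.inl (Or.inr (Or.inr ha))))
    · exact Or.inr (Or.inr (Or.inr (Or.inl ha)))
  have hθ₂V : θ₂.props ⊆ V := by
    rw [← hV, hbigprops, hθ₂props]
    intro a ha
    rcases ha with ha | (ha | ha) | ha
    · exact Or.inr (Or.inl ha)
    · exact Or.inr (Or.inr (Or.inl (Or.inr (Or.inl ha))))
    · exact Or.inr (Or.inr (Or.inl (Or.inr (Or.inr ha))))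
    · exact Or.inr (Or.inr (Or.inr (Or.inr ha)))
  have hB₁ : ∀ a ∈ φ₂.props, a ∉ θ₁.props := by
    intro a ha hmem
    rw [hθ₁props] at hmem
    rcases hmem with h | (h | h) | h
    · exact dψ₁'φ₂ a h ha
    · exact d₁₂ a h ha
    · exact d₂₃ a ha h
    · exact d₂ψ₁ a ha h
  have hB₂ : ∀ a ∈ φ₁.props, a ∉ θ₂.props := by
    intro a ha hmem
    rw [hθ₂props] at hmem
    rcases hmem with h | (h | h) | h
    · exact dψ₂'φ₁ a h ha
    · exact d₁₂ a ha h
    · exact d₁₃ a ha h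
    · exact d₁ψ₂ a ha h
  have hW₁W₂ : ∀ a, a ∈ θ₁.props → a ∈ θ₂.props → a ∈ I := by
    intro a h1 h2
    rw [hθ₁props] at h1
    rw [hθ₂props] at h2
    rcases h1 with h1 | (h1 | h1) | h1
    · rcases h2 with h2 | (h2 | h2) | h2
      · exact hψ' a (Or.inr h1) (Or.inr h2)
      · exact absurd h2 (fun h => dψ₁'φ₂ a h1 h)
      · exact hφ₃ h2
      · exact hψ' a (Or.inr h1) (Or.inl h2)
    · rcases h2 with h2 | (h2 | h2) | h2
      · exact absurd h1 (dψ₂'φ₁ a h2)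
      · exact absurd h2 (d₁₂ a h1)
      · exact hφ₃ h2
      · exact absurd h2 (d₁ψ₂ a h1)
    · exact hφ₃ h1
    · rcases h2 with h2 | (h2 | h2) | h2
      · exact hψ' a (Or.inl h1) (Or.inr h2)
      · exact absurd h1 (d₂ψ₁ a h2)
      · exact hφ₃ h2
      · exact hψ' a (Or.inl h1) (Or.inl h2)
  constructor
  · rintro ⟨f, hfO, hf⟩
    obtain ⟨fc, hfcI, hfc⟩ := hcs
    have hfcB : ∀ (B : LTL α), (∀ σ, LTL.SatAt σ (φ₁.and (φ₂.and φ₃)) 0 → LTL.SatAt σ B 0) →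
        ∀ σ, CompatibleCounter V I fc σ → LTL.Sat σ B := by
      intro B hproj σ hcc
      have hno := hfc σ hcc
      have h1 : LTL.SatAt σ (φ₁.and (φ₂.and φ₃)) 0 := by
        by_contra hcon
        exact hno ⟨hcc.1, hcon⟩
      exact hproj σ h1
    constructor
    · refine aux_real V I O hIO hpart θ₁ φ₂ f hfO fc hfcI hθ₁V hB₁ ?_
        (hfcB φ₂ (fun σ h => h.2.1))
      intro σ hcomp hB
      have hsat := (hf σ hcomp).2
      rw [hθ₁]
      simp only [LTL.Sat, LTL.SatAt, LTL.impl] at hsat hB ⊢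
      tauto
    · refine aux_real V I O hIO hpart θ₂ φ₁ f hfO fc hfcI hθ₂V hB₂ ?_
        (hfcB φ₁ (fun σ h => h.1))
      intro σ hcomp hB
      have hsat := (hf σ hcomp).2
      rw [hθ₂]
      simp only [LTL.Sat, LTL.SatAt, LTL.impl] at hsat hB ⊢
      tauto
  · rintro ⟨⟨f₁, hf₁O, hf₁⟩, ⟨f₂, hf₂O, hf₂⟩⟩
    refine ⟨fun h i => f₁ (restrictFin h θ₁.props) (i ∩ θ₁.props) ∪
      f₂ (restrictFin h θ₂.props) (i ∩ θ₂.props), ?_, ?_⟩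
    · intro h i a ha
      rcases ha with ha | ha
      · exact (hf₁O _ _ ha).1
      · exact (hf₂O _ _ ha).1
    · rintro σ ⟨hσV, hσf⟩
      have hσf' : ∀ n, f₁ (restrictFin (hist σ n) θ₁.props) ((σ n ∩ I) ∩ θ₁.props) ∪
          f₂ (restrictFin (hist σ n) θ₂.props) ((σ n ∩ I) ∩ θ₂.props) = σ n ∩ O := hσf
      have hcompat1 : CompatibleImpl θ₁.props (I ∩ θ₁.props) (O ∩ θ₁.props) f₁ (restrict σ θ₁.props) := by
        refine ⟨fun n => Set.inter_subset_right, fun n => ?_⟩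
        rw [hist_restrict]
        have harg : restrict σ θ₁.props n ∩ (I ∩ θ₁.props) = (σ n ∩ I) ∩ θ₁.props := by
          ext a
          constructor
          · rintro ⟨⟨h1, h2⟩, h3, _⟩; exact ⟨⟨h1, h3⟩, h2⟩
          · rintro ⟨⟨h1, h3⟩, h2⟩; exact ⟨⟨h1, h2⟩, h3, h2⟩
        rw [harg]
        ext a
        constructor
        · intro ha
          have haO : a ∈ O ∩ θ₁.props := hf₁O _ _ ha
          have haσ : a ∈ σ n ∩ O := by rw [← hσf' n]; exact Or.inl ha
          exact ⟨⟨haσ.1, haO.2⟩, haO⟩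
        · rintro ⟨⟨haσ, haW₁⟩, haO, _⟩
          have : a ∈ f₁ (restrictFin (hist σ n) θ₁.props) ((σ n ∩ I) ∩ θ₁.props) ∪
              f₂ (restrictFin (hist σ n) θ₂.props) ((σ n ∩ I) ∩ θ₂.props) := by
            rw [hσf' n]; exact ⟨haσ, haO⟩
          rcases this with h | h
          · exact h
          · exact absurd (hW₁W₂ a haW₁ (hf₂O _ _ h).2) (fun hI => hIdisj a hI haO)
      have hcompat2 : CompatibleImpl θ₂.props (I ∩ θ₂.props) (O ∩ θ₂.props) f₂ (restrict σ θ₂.props) := by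
        refine ⟨fun n => Set.inter_subset_right, fun n => ?_⟩
        rw [hist_restrict]
        have harg : restrict σ θ₂.props n ∩ (I ∩ θ₂.props) = (σ n ∩ I) ∩ θ₂.props := by
          ext a
          constructor
          · rintro ⟨⟨h1, h2⟩, h3, _⟩; exact ⟨⟨h1, h3⟩, h2⟩
          · rintro ⟨⟨h1, h3⟩, h2⟩; exact ⟨⟨h1, h2⟩, h3, h2⟩
        rw [harg]
        ext a
        constructor
        · intro ha
          have haO : a ∈ O ∩ θ₂.props := hf₂O _ _ ha
          have haσ : a ∈ σ n ∩ O := by rw [← hσf' n]; exact Or.inr ha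
          exact ⟨⟨haσ.1, haO.2⟩, haO⟩
        · rintro ⟨⟨haσ, haW₂⟩, haO, _⟩
          have : a ∈ f₁ (restrictFin (hist σ n) θ₁.props) ((σ n ∩ I) ∩ θ₁.props) ∪
              f₂ (restrictFin (hist σ n) θ₂.props) ((σ n ∩ I) ∩ θ₂.props) := by
            rw [hσf' n]; exact ⟨haσ, haO⟩
          rcases this with h | h
          · exact absurd (hW₁W₂ a (hf₁O _ _ h).2 haW₂) (fun hI => hIdisj a hI haO)
          · exact h
      have s₁ := (hf₁ _ hcompat1).2
      have s₂ := (hf₂ _ hcompat2).2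
      refine ⟨hσV, ?_⟩
      have e1 := satAt_restrict (σ := σ) (X := θ₁.props) ψ₁'
        (by rw [hθ₁props]; exact Set.subset_union_left) 0
      have e2 := satAt_restrict (σ := σ) (X := θ₁.props) φ₁
        (by rw [hθ₁props]; intro a ha; exact Or.inr (Or.inl (Or.inl ha))) 0
      have e3 := satAt_restrict (σ := σ) (X := θ₁.props) φ₃
        (by rw [hθ₁props]; intro a ha; exact Or.inr (Or.inl (Or.inr ha))) 0
      have e4 := satAt_restrict (σ := σ) (X := θ₁.props) ψ₁
        (by rw [hθ₁props]; intro a ha; exact Or.inr (Or.inr ha)) 0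
      have e5 := satAt_restrict (σ := σ) (X := θ₂.props) ψ₂'
        (by rw [hθ₂props]; exact Set.subset_union_left) 0
      have e6 := satAt_restrict (σ := σ) (X := θ₂.props) φ₂
        (by rw [hθ₂props]; intro a ha; exact Or.inr (Or.inl (Or.inl ha))) 0
      have e7 := satAt_restrict (σ := σ) (X := θ₂.props) φ₃
        (by rw [hθ₂props]; intro a ha; exact Or.inr (Or.inl (Or.inr ha))) 0
      have e8 := satAt_restrict (σ := σ) (X := θ₂.props) ψ₂
        (by rw [hθ₂props]; intro a ha; exact Or.inr (Or.inr ha)) 0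
      rw [hθ₁] at s₁ e1 e2 e3 e4
      rw [hθ₂] at s₂ e5 e6 e7 e8
      simp only [LTL.Sat, LTL.SatAt, LTL.impl] at s₁ s₂ ⊢
      simp only [LTL.impl] at e1 e2 e3 e4 e5 e6 e7 e8
      rw [e1, e2, e3, e4] at s₁
      rw [e5, e6, e7, e8] at s₂
      refine ⟨s₁.1, s₂.1, ?_⟩
      rcases s₁.2 with h | h1
      · exact Or.inl (fun hc => h ⟨hc.1, hc.2.2⟩)
      rcases s₂.2 with h | h2
      · exact Or.inl (fun hc => h ⟨hc.2.1, hc.2.2⟩)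
      exact Or.inr ⟨h1, h2⟩

end SpecDecomp
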